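/- Let q ≥ 1 be an integer, α > 0, and let n_1 ≥ n_2 ≥ ... ≥ n_q be non-negative integers in decreasing order with n = ∑_k n_k > 0; let k' be the largest index with n_{k'} > 0 and let m = #{k : n_k > 0}. Then the local local BDeu score -log pGam(α, n) + ∑_{k=1}^q log pGam(α/q, n_k) is at most -m·log q - ∑_{l=1}^{k'-1} log(1 + n_l/α). -/

import Mathlib

/-- `pGam α x = Γ(x+α)/Γ(α)`. -/
noncomputable def pGam (α : ℝ) (x : ℕ) : ℝ := Real.Gamma (x + α) / Real.Gamma α

/-!
On positive bases `pGam α x = α (α + 1) ⋯ (α + x - 1)`. Shrinking the base from `α` to `α / q`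
costs at least a factor `q` for every non-zero count, and
`pGam α (x + y) ≥ (1 + x / α) pGam α x pGam α y` for `y > 0`. Merging the counts one at a time,
the `l`-th merge gains a factor `1 + S / α ≥ 1 + n_l / α`, where `S ≥ n_l` is the running total.
-/

open Finset

section pGam

variable {α : ℝ}

theorem pGam_eq_prod (hα : 0 < α) (x : ℕ) : pGam α x = ∏ i ∈ range x, (α + i) := by
  induction x with
  | zero => simp [pGam, (Real.Gamma_pos_of_pos hα).ne']
  | succ m ih =>
    rw [prod_range_succ, ← ih, pGam, pGam, Nat.cast_succ, add_right_comm,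
      Real.Gamma_add_one (by positivity)]
    ring

theorem pGam_pos (hα : 0 < α) (x : ℕ) : 0 < pGam α x := by
  rw [pGam_eq_prod hα]
  exact prod_pos fun i _ => by positivity

theorem pGam_zero (hα : 0 < α) : pGam α 0 = 1 := by
  simp [pGam_eq_prod hα]

theorem pGam_add (hα : 0 < α) (x y : ℕ) : pGam α (x + y) = pGam α x * pGam (α + x) y := by
  simp only [pGam_eq_prod hα, pGam_eq_prod (by positivity : 0 < α + x), prod_range_add,
    Nat.cast_add, add_assoc]

/-- Only the first factor of `∏ i < x, (β + i)` is rescaled; the others grow with the base. -/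
theorem div_mul_pGam_le_pGam {β : ℝ} (hβ : 0 < β) (hβα : β ≤ α) {x : ℕ} (hx : x ≠ 0) :
    α / β * pGam β x ≤ pGam α x := by
  obtain ⟨m, rfl⟩ := Nat.exists_eq_succ_of_ne_zero hx
  have hα : 0 < α := hβ.trans_le hβα
  rw [pGam_eq_prod hβ, pGam_eq_prod hα, prod_range_succ', prod_range_succ']
  have htail : ∏ i ∈ range m, (β + (i + 1 : ℕ)) ≤ ∏ i ∈ range m, (α + (i + 1 : ℕ)) :=
    prod_le_prod (fun i _ => by positivity) fun i _ => by gcongr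
  calc α / β * ((∏ i ∈ range m, (β + (i + 1 : ℕ))) * (β + (0 : ℕ)))
      = (∏ i ∈ range m, (β + (i + 1 : ℕ))) * (α + (0 : ℕ)) := by
        simp only [Nat.cast_add, Nat.cast_one, CharP.cast_eq_zero, add_zero]; field_simp
    _ ≤ (∏ i ∈ range m, (α + (i + 1 : ℕ))) * (α + (0 : ℕ)) := by gcongr

theorem pGam_mul_pGam_mul_le_pGam_add (hα : 0 < α) (x : ℕ) {y : ℕ} (hy : y ≠ 0) :
    pGam α x * pGam α y * (1 + x / α) ≤ pGam α (x + y) := by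
  have hshift := div_mul_pGam_le_pGam hα (le_add_of_nonneg_right x.cast_nonneg) hy
  calc pGam α x * pGam α y * (1 + x / α) = pGam α x * ((α + x) / α * pGam α y) := by
        field_simp
    _ ≤ pGam α x * pGam (α + x) y := by gcongr; exact (pGam_pos hα x).le
    _ = pGam α (x + y) := (pGam_add hα x y).symm

theorem log_add_log_pGam_div_le_log_pGam (hα : 0 < α) {c : ℝ} (hc : 1 ≤ c) {x : ℕ}
    (hx : x ≠ 0) : Real.log c + Real.log (pGam (α / c) x) ≤ Real.log (pGam α x) := by
  have hαc : 0 < α / c := div_pos hα (by linarith)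
  have h := div_mul_pGam_le_pGam hαc (div_le_self hα.le hc) hx
  rw [div_div_cancel₀ hα.ne'] at h
  rw [← Real.log_mul (by linarith) (pGam_pos hαc x).ne']
  exact Real.log_le_log (by have := pGam_pos hαc x; positivity) h

theorem sum_log_pGam_add_sum_log_le_log_pGam_sum (hα : 0 < α) (n : ℕ → ℕ) (s : ℕ)
    (hn : ∀ k ∈ Ioc 0 s, n k ≠ 0) :
    ∑ k ∈ range (s + 1), Real.log (pGam α (n k)) + ∑ l ∈ range s, Real.log (1 + n l / α)
      ≤ Real.log (pGam α (∑ k ∈ range (s + 1), n k)) := by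
  induction s with
  | zero => simp
  | succ s ih =>
    set S := ∑ k ∈ range (s + 1), n k
    have ih := ih fun k hk => hn k (Ioc_subset_Ioc_right s.le_succ hk)
    have hnS : (n s : ℝ) ≤ S := by
      exact_mod_cast single_le_sum (fun _ _ => Nat.zero_le _) (self_mem_range_succ s)
    have hlog : Real.log (1 + n s / α) ≤ Real.log (1 + S / α) :=
      Real.log_le_log (by positivity) (by gcongr)
    have hsuper : Real.log (pGam α S) + Real.log (pGam α (n (s + 1))) + Real.log (1 + S / α)
        ≤ Real.log (pGam α (S + n (s + 1))) := by
      have := pGam_pos hα S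
      have := pGam_pos hα (n (s + 1))
      rw [← Real.log_mul (by positivity) (by positivity),
        ← Real.log_mul (by positivity) (by positivity)]
      exact Real.log_le_log (by positivity)
        (pGam_mul_pGam_mul_le_pGam_add hα S (hn _ (by simp)))
    rw [sum_range_succ (fun k => Real.log (pGam α (n k))) (s + 1),
      sum_range_succ (fun l => Real.log (1 + n l / α)) s, sum_range_succ n (s + 1)]
    linarith

end pGam

theorem sum_range_eq_sum_range_of_eq_zero {M : Type*} [AddCommMonoid M] {f : ℕ → M} {s q : ℕ}
    (hsq : s ≤ q) (hf : ∀ l, s ≤ l → l < q → f l = 0) :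
    ∑ k ∈ range s, f k = ∑ k ∈ range q, f k :=
  sum_subset (range_subset_range.2 hsq) fun l hlq hls =>
    hf l (by simpa using hls) (by simpa using hlq)

/-- Counts are indexed from `0`, so `k'` is the 0-based index of the last positive count. -/
theorem stmt_7_general (q : ℕ) (hq : 1 ≤ q) (α : ℝ) (hα : 0 < α) (n : ℕ → ℕ) (k' : ℕ)
    (hdec : ∀ i j, i ≤ j → j < q → n j ≤ n i)
    (hk' : k' < q) (hk'pos : 0 < n k')
    (hk'max : ∀ l, k' < l → l < q → n l = 0) :
    -Real.log (pGam α (∑ k ∈ Finset.range q, n k)) +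
        ∑ k ∈ Finset.range q, Real.log (pGam (α / q) (n k))
      ≤ -(((Finset.range q).filter fun k => 0 < n k).card : ℝ) * Real.log q -
          ∑ l ∈ Finset.range k', Real.log (1 + (n l : ℝ) / α) := by
  have hq' : (1 : ℝ) ≤ q := by exact_mod_cast hq
  have hshrink : ∀ k, (if 0 < n k then (1 : ℝ) else 0) * Real.log q
      + Real.log (pGam (α / q) (n k)) ≤ Real.log (pGam α (n k)) := by
    intro k
    split_ifs with h
    · simpa using log_add_log_pGam_div_le_log_pGam hα hq' h.ne'
    · rw [Nat.eq_zero_of_not_pos h, pGam_zero hα, pGam_zero (by positivity)]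
      simp
  have hchain := sum_log_pGam_add_sum_log_le_log_pGam_sum hα n k' fun k hk =>
    (hk'pos.trans_le (hdec k k' (mem_Ioc.1 hk).2 hk')).ne'
  have htail : ∀ l, k' + 1 ≤ l → l < q → n l = 0 := fun l hl => hk'max l hl
  rw [sum_range_eq_sum_range_of_eq_zero hk' htail,
    sum_range_eq_sum_range_of_eq_zero (f := fun k => Real.log (pGam α (n k))) hk'
      fun l hl hlq => by simp [htail l hl hlq, pGam_zero hα]] at hchain
  have hsum := sum_le_sum fun k (_ : k ∈ range q) => hshrink k
  rw [sum_add_distrib, ← sum_mul, sum_boole] at hsum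
  linarith

/-- Counts in decreasing order (0-based); `k'` is the (0-based) largest index with a
positive count, `m` the number of non-zero counts. -/
theorem stmt_7 (q : ℕ) (hq : 1 ≤ q) (α : ℝ) (hα : 0 < α) (n : ℕ → ℕ) (k' : ℕ)
    (hdec : ∀ i j, i ≤ j → j < q → n j ≤ n i)
    (hN : 0 < ∑ k ∈ Finset.range q, n k)
    (hk' : k' < q) (hk'pos : 0 < n k')
    (hk'max : ∀ l, k' < l → l < q → n l = 0) :
    -Real.log (pGam α (∑ k ∈ Finset.range q, n k)) +
        ∑ k ∈ Finset.range q, Real.log (pGam (α / q) (n k))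
      ≤ -(((Finset.range q).filter fun k => 0 < n k).card : ℝ) * Real.log q -
          ∑ l ∈ Finset.range k', Real.log (1 + (n l : ℝ) / α) :=
  stmt_7_general q hq α hα n k' hdec hk' hk'pos hk'max
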